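/- Every binary weight measure is gapfree: if μ is a weight measure over a finite alphabet Σ whose set of base weights μ(Σ) has exactly two elements, then μ is gapfree. -/

import Mathlib

/-- The weight of a word: the product of the weights of its letters. -/
def weight {α A : Type*} [CommMonoid A] [LinearOrder A] [IsOrderedCancelMonoid A] (μ : α → A) (w : List α) : A :=
  (w.map μ).prod

/-- The factor-weight function: `factorWeight μ w i` is the maximum weight of a
length-`i` factor (contiguous subword) of `w`. -/
def factorWeight {α A : Type*} [CommMonoid A] [LinearOrder A] [IsOrderedCancelMonoid A] (μ : α → A)
    (w : List α) (i : ℕ) : A :=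
  ((List.range (w.length + 1 - i)).map fun j => weight μ ((w.drop j).take i)).foldr max 1

/-- A word is `μ`-prefix normal if its factor-weight function agrees with its
prefix-weight function. -/
def PrefixNormal {α A : Type*} [CommMonoid A] [LinearOrder A] [IsOrderedCancelMonoid A] (μ : α → A)
    (w : List α) : Prop :=
  ∀ i ≤ w.length, factorWeight μ w i = weight μ (w.take i)

/-- A weight measure is gapfree if for every word `w` and every `1 ≤ i ≤ |w|` there is a
letter `a` with `f_{w,μ}(i) = f_{w,μ}(i-1) * μ a`. -/
def Gapfree {α A : Type*} [CommMonoid A] [LinearOrder A] [IsOrderedCancelMonoid A] (μ : α → A) : Prop :=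
  ∀ w : List α, ∀ i, 1 ≤ i → i ≤ w.length →
    ∃ a : α, factorWeight μ w i = factorWeight μ w (i - 1) * μ a

/-- `pnClass μ w` is the set `P_μ(w)` of words that are factor-weight equivalent to `w`
and `μ`-prefix normal. -/
def pnClass {α A : Type*} [CommMonoid A] [LinearOrder A] [IsOrderedCancelMonoid A] (μ : α → A)
    (w : List α) : Set (List α) :=
  {v | (∀ i, factorWeight μ v i = factorWeight μ w i) ∧ PrefixNormal μ v}
/-! If the letters weigh `x < y`, a word of length `n` with `c` heavy letters weighs
`x ^ (n - c) * y ^ c`, which is strictly increasing in `c`. Dropping the first letter of a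
heaviest factor of length `i + 1`, and extending a heaviest factor of length `i` by one letter,
gives `f(i) * x ≤ f(i + 1) ≤ f(i) * y`. Both ends are weights of words of length `i + 1` whose
heavy-letter counts differ by one, so `f(i + 1)` must be one of them. -/

namespace List

variable {α : Type*}

theorem foldr_max_mem_cons [LinearOrder α] (b : α) (l : List α) : l.foldr max b ∈ b :: l := by
  induction l with
  | nil => exact mem_singleton_self b
  | cons a l ih =>
    rw [foldr_cons]
    rcases max_choice a (l.foldr max b) with h | h <;> rw [h]
    · exact mem_cons_of_mem _ mem_cons_self
    · exact (sublist_cons_self a l).cons_cons b |>.subset ih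

theorem exists_cons_infix_or_append_infix_of_length_lt {u w : List α} (hu : u <:+: w)
    (hlt : u.length < w.length) : ∃ a, a :: u <:+: w ∨ u ++ [a] <:+: w := by
  obtain ⟨s, t, rfl⟩ := hu
  rcases t with _ | ⟨a, t⟩
  · obtain ⟨s, a, rfl⟩ : ∃ s' a, s = s' ++ [a] := by
      rcases eq_nil_or_concat s with rfl | h
      · simp at hlt
      · simpa using h
    exact ⟨a, .inl ⟨s, [], by simp⟩⟩
  · exact ⟨a, .inr ⟨s, t, by simp⟩⟩

end List

section FactorWeight

variable {α A : Type*} [CommMonoid A] [LinearOrder A] [IsOrderedCancelMonoid A] {μ : α → A}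

@[simp]
theorem weight_nil : weight μ [] = 1 := rfl

@[simp]
theorem weight_cons (a : α) (v : List α) : weight μ (a :: v) = μ a * weight μ v := by
  simp [weight]

@[simp]
theorem weight_append (u v : List α) : weight μ (u ++ v) = weight μ u * weight μ v := by
  simp [weight]

theorem one_le_weight (hμ : ∀ a, 1 ≤ μ a) (v : List α) : 1 ≤ weight μ v :=
  List.one_le_prod_of_one_le (List.forall_mem_map.2 fun a _ => hμ a)

theorem mem_factorWeight_windows_iff {w : List α} {i : ℕ} {z : A} :
    z ∈ (List.range (w.length + 1 - i)).map (fun j => weight μ ((w.drop j).take i)) ↔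
      ∃ u, u <:+: w ∧ u.length = i ∧ weight μ u = z := by
  simp only [List.mem_map, List.mem_range]
  constructor
  · rintro ⟨j, hj, rfl⟩
    refine ⟨_, (List.take_prefix _ _).isInfix.trans (List.drop_suffix _ _).isInfix, ?_, rfl⟩
    simp only [List.length_take, List.length_drop, inf_eq_left]
    omega
  · rintro ⟨u, ⟨s, t, rfl⟩, rfl, rfl⟩
    refine ⟨s.length, ?_, by simp⟩
    simp only [List.append_assoc, List.length_append]
    omega

theorem weight_le_factorWeight {u w : List α} (hu : u <:+: w) :
    weight μ u ≤ factorWeight μ w u.length :=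
  List.le_max_of_le' 1 (mem_factorWeight_windows_iff.2 ⟨u, hu, rfl, rfl⟩) le_rfl

theorem factorWeight_eq_one_or_exists (w : List α) (i : ℕ) : factorWeight μ w i = 1 ∨
    ∃ u, u <:+: w ∧ u.length = i ∧ factorWeight μ w i = weight μ u := by
  rcases List.mem_cons.1 (List.foldr_max_mem_cons 1
    ((List.range (w.length + 1 - i)).map fun j => weight μ ((w.drop j).take i))) with h | h
  · exact .inl h
  · obtain ⟨u, hu, hlen, heq⟩ := mem_factorWeight_windows_iff.1 h
    exact .inr ⟨u, hu, hlen, heq.symm⟩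

theorem exists_factorWeight_eq (hμ : ∀ a, 1 ≤ μ a) {w : List α} {i : ℕ}
    (hi : i ≤ w.length) : ∃ u, u <:+: w ∧ u.length = i ∧ factorWeight μ w i = weight μ u := by
  obtain ⟨u, hu, rfl⟩ : ∃ u, u <:+: w ∧ u.length = i :=
    ⟨w.take i, (List.take_prefix _ _).isInfix, by simp [hi]⟩
  refine (factorWeight_eq_one_or_exists w _).elim (fun h => ?_) id
  exact ⟨u, hu, rfl, le_antisymm (h.le.trans (one_le_weight hμ u)) (weight_le_factorWeight hu)⟩

theorem exists_factorWeight_succ_le_mul (hμ : ∀ a, 1 ≤ μ a) {w : List α} {k : ℕ}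
    (hk : k + 1 ≤ w.length) :
    ∃ a, factorWeight μ w (k + 1) ≤ factorWeight μ w k * μ a := by
  obtain ⟨_ | ⟨a, u⟩, hu, hlen, heq⟩ := exists_factorWeight_eq hμ hk
  · simp at hlen
  obtain rfl : u.length = k := by simpa using hlen
  refine ⟨a, ?_⟩
  rw [heq, weight_cons, mul_comm]
  exact mul_le_mul_left (weight_le_factorWeight ((List.suffix_cons a u).isInfix.trans hu)) _

theorem exists_mul_le_factorWeight_succ (hμ : ∀ a, 1 ≤ μ a) {w : List α} {k : ℕ}
    (hk : k + 1 ≤ w.length) :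
    ∃ a, factorWeight μ w k * μ a ≤ factorWeight μ w (k + 1) := by
  obtain ⟨u, hu, rfl, heq⟩ := exists_factorWeight_eq hμ (Nat.le_of_succ_le hk)
  obtain ⟨a, ha | ha⟩ := List.exists_cons_infix_or_append_infix_of_length_lt hu hk
  · exact ⟨a, by simpa [heq, mul_comm] using weight_le_factorWeight (μ := μ) ha⟩
  · exact ⟨a, by simpa [heq] using weight_le_factorWeight (μ := μ) ha⟩

end FactorWeight

section TwoWeights

variable {α A : Type*} [CommMonoid A] [LinearOrder A] [IsOrderedCancelMonoid A] {μ : α → A}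
  {x y : A}

theorem exists_weight_eq_pow_mul_pow (hμ : ∀ a, μ a = x ∨ μ a = y) (v : List α) :
    ∃ c ≤ v.length, weight μ v = x ^ (v.length - c) * y ^ c := by
  induction v with
  | nil => exact ⟨0, le_rfl, by simp⟩
  | cons a v ih =>
    obtain ⟨c, hc, heq⟩ := ih
    rcases hμ a with ha | ha
    · refine ⟨c, hc.trans (Nat.le_succ _), ?_⟩
      rw [weight_cons, heq, ha, List.length_cons, Nat.sub_add_comm hc, pow_succ]
      ac_rfl
    · refine ⟨c + 1, Nat.succ_le_succ hc, ?_⟩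
      rw [weight_cons, heq, ha, List.length_cons, Nat.add_sub_add_right, pow_succ]
      ac_rfl

theorem strictMonoOn_pow_sub_mul_pow (hxy : x < y) (n : ℕ) :
    StrictMonoOn (fun c => x ^ (n - c) * y ^ c) (Set.Iic n) := by
  intro c _ d (hd : d ≤ n) hcd
  obtain ⟨k, rfl⟩ := Nat.exists_eq_add_of_lt hcd
  calc x ^ (n - c) * y ^ c = x ^ (n - (c + k + 1)) * (x ^ (k + 1) * y ^ c) := by
        rw [← mul_assoc, ← pow_add]; congr 2; omega
    _ < x ^ (n - (c + k + 1)) * (y ^ (k + 1) * y ^ c) :=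
        mul_lt_mul_right (mul_lt_mul_left (pow_lt_pow_left' k.succ_ne_zero hxy) _) _
    _ = x ^ (n - (c + k + 1)) * y ^ (c + k + 1) := by rw [← pow_add]; ac_rfl

theorem pow_sub_mul_pow_eq_mul_or_eq_mul (hxy : x < y) {n c d : ℕ} (hc : c ≤ n + 1)
    (hd : d ≤ n) (hlo : x ^ (n - d) * y ^ d * x ≤ x ^ (n + 1 - c) * y ^ c)
    (hhi : x ^ (n + 1 - c) * y ^ c ≤ x ^ (n - d) * y ^ d * y) :
    x ^ (n + 1 - c) * y ^ c = x ^ (n - d) * y ^ d * x ∨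
      x ^ (n + 1 - c) * y ^ c = x ^ (n - d) * y ^ d * y := by
  have hmono := strictMonoOn_pow_sub_mul_pow hxy (n + 1)
  have hx : x ^ (n - d) * y ^ d * x = x ^ (n + 1 - d) * y ^ d := by
    rw [Nat.sub_add_comm hd, pow_succ]; ac_rfl
  have hy : x ^ (n - d) * y ^ d * y = x ^ (n + 1 - (d + 1)) * y ^ (d + 1) := by
    rw [Nat.add_sub_add_right, pow_succ]; ac_rfl
  rw [hx] at hlo ⊢
  rw [hy] at hhi ⊢
  have hdc : d ≤ c := (hmono.le_iff_le (Set.mem_Iic.2 (by omega)) (Set.mem_Iic.2 hc)).1 hlo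
  have hcd : c ≤ d + 1 := (hmono.le_iff_le (Set.mem_Iic.2 hc) (Set.mem_Iic.2 (by omega))).1 hhi
  rcases (by omega : c = d ∨ c = d + 1) with rfl | rfl
  exacts [.inl rfl, .inr rfl]

theorem factorWeight_succ_eq_mul_or_eq_mul (hx : 1 ≤ x) (hxy : x < y)
    (hμ : ∀ a, μ a = x ∨ μ a = y) {w : List α} {k : ℕ} (hk : k + 1 ≤ w.length) :
    factorWeight μ w (k + 1) = factorWeight μ w k * x ∨
      factorWeight μ w (k + 1) = factorWeight μ w k * y := by
  have h1 : ∀ a, 1 ≤ μ a := fun a =>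
    (hμ a).elim (·.symm ▸ hx) (·.symm ▸ hx.trans hxy.le)
  obtain ⟨u, -, hu, huk⟩ := exists_factorWeight_eq h1 hk
  obtain ⟨v, -, hv, hvk⟩ := exists_factorWeight_eq h1 (Nat.le_of_succ_le hk)
  obtain ⟨c, hc, hcu⟩ := exists_weight_eq_pow_mul_pow hμ u
  obtain ⟨d, hd, hdv⟩ := exists_weight_eq_pow_mul_pow hμ v
  obtain ⟨a, ha⟩ := exists_mul_le_factorWeight_succ h1 hk
  obtain ⟨b, hb⟩ := exists_factorWeight_succ_le_mul h1 hk
  have hlo := (mul_le_mul_right ((hμ a).elim (·.symm.le) (·.symm ▸ hxy.le)) _).trans ha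
  have hhi := hb.trans (mul_le_mul_right ((hμ b).elim (·.symm ▸ hxy.le) (·.le)) _)
  rw [huk, hvk, hcu, hdv, hu, hv] at hlo hhi ⊢
  rw [hu] at hc
  rw [hv] at hd
  exact pow_sub_mul_pow_eq_mul_or_eq_mul hxy hc hd hlo hhi

end TwoWeights

/-- Every binary weight measure (one whose set of base weights has exactly two
elements) is gapfree. -/
theorem binary_weightMeasure_gapfree {α A : Type*} [Fintype α] [DecidableEq A]
    [CommMonoid A] [LinearOrder A] [IsOrderedCancelMonoid A] (μ : α → A) (hμ : ∀ a : α, 1 < μ a)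
    (hbin : (Finset.univ.image μ).card = 2) :
    Gapfree μ := by
  obtain ⟨x, y, hne, himage⟩ := Finset.card_eq_two.1 hbin
  wlog hxy : x < y generalizing x y
  · exact this y x hne.symm (by rw [himage, Finset.pair_comm]) (hne.lt_or_gt.resolve_left hxy)
  have hmem : ∀ z, z ∈ Finset.univ.image μ ↔ z = x ∨ z = y := by simp [himage]
  have hval : ∀ a, μ a = x ∨ μ a = y := fun a => (hmem _).1 (by simp)
  obtain ⟨a, rfl⟩ : ∃ a, μ a = x := by simpa using (hmem x).2 (.inl rfl)
  obtain ⟨b, rfl⟩ : ∃ b, μ b = y := by simpa using (hmem y).2 (.inr rfl)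
  intro w i hi hiw
  obtain ⟨k, rfl⟩ := Nat.exists_eq_add_of_le' hi
  rw [Nat.add_sub_cancel]
  rcases factorWeight_succ_eq_mul_or_eq_mul (hμ a).le hxy hval hiw with h | h
  exacts [⟨a, h⟩, ⟨b, h⟩]
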